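/- For integers k₁, k₂ ≥ 1, the first-order coefficient of the unequal-truncation Hessian operator D^{k₂} ∘ D^{k₁} vanishes: c_0^{k₂} ∑_{m=1}^{k₁} (-1)^{2-m} C(k₁,m) + c_0^{k₁} ∑_{l=1}^{k₂} (-1)^{2-l} C(k₂,l) + ∑_{l=1}^{k₂} ∑_{m=1}^{k₁} (-1)^{2-l-m} C(k₂,l) C(k₁,m) (1/l + 1/m) = 0, where c_0^k = ∑_{j=1}^k 1/j. -/

import Mathlib

/-!
Since `(-1) ^ (2 - m) = (-1) ^ m`, the double sum splits as `B k₂ * A k₁ + A k₂ * B k₁` with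
`A k = ∑ (-1) ^ m * C(k, m)` and `B k = ∑ (-1) ^ m * C(k, m) / m`. The classical identity
`B k = -H k` (harmonic numbers) makes the whole expression `(H k₂ + B k₂) * A k₁ + (H k₁ + B k₁) * A k₂ = 0`,
whatever `A k` is. That identity follows by induction from `C(n+1, m) / m = C(n, m) / m + C(n+1, m) / (n+1)`,
which gives `B (n+1) - B n = A (n+1) / (n+1) = -1 / (n+1)`.
-/

open Finset

theorem sum_Icc_neg_one_pow_mul_choose {R : Type*} [Ring R] {n : ℕ} (hn : n ≠ 0) :
    ∑ m ∈ Icc 1 n, (-1 : R) ^ m * n.choose m = -1 := by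
  have h := congrArg (Int.cast : ℤ → R) (Int.alternating_sum_range_choose (n := n))
  rw [if_neg hn, range_eq_Ico, sum_eq_sum_Ico_succ_bot (by omega : 0 < n + 1), zero_add,
    Ico_add_one_right_eq_Icc] at h
  push_cast at h
  simpa [eq_neg_iff_add_eq_zero, add_comm] using h

theorem choose_succ_div_eq (n : ℕ) {m : ℕ} (hm : m ≠ 0) :
    ((n + 1).choose m : ℚ) / m = n.choose m / m + (n + 1).choose m / (n + 1) := by
  obtain ⟨m, rfl⟩ := Nat.exists_eq_add_one_of_ne_zero hm
  have hpascal : ((n + 1).choose (m + 1) : ℚ) = n.choose (m + 1) + n.choose m := by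
    rw [Nat.choose_succ_succ']; push_cast; ring
  have habsorb : ((n + 1 : ℕ) * n.choose m : ℚ) = (n + 1).choose (m + 1) * (m + 1 : ℕ) := by
    exact_mod_cast Nat.add_one_mul_choose_eq n m
  push_cast at habsorb ⊢
  field_simp
  linear_combination (n + 1 : ℚ) * hpascal + habsorb

theorem sum_Icc_neg_one_pow_mul_choose_div (n : ℕ) :
    ∑ m ∈ Icc 1 n, (-1 : ℚ) ^ m * n.choose m / m = -harmonic n := by
  induction n with
  | zero => simp
  | succ n ih =>
    have hsplit : ∀ m ∈ Icc 1 (n + 1), (-1 : ℚ) ^ m * (n + 1).choose m / m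
        = (-1) ^ m * n.choose m / m + (-1) ^ m * (n + 1).choose m / (n + 1) := fun m hm => by
      rw [mul_div_assoc, choose_succ_div_eq n (Nat.one_le_iff_ne_zero.mp (mem_Icc.1 hm).1)]
      ring
    rw [sum_congr rfl hsplit, sum_add_distrib, sum_Icc_succ_top (by omega), ← sum_div,
      sum_Icc_neg_one_pow_mul_choose (by omega), ih, harmonic_succ, Nat.choose_succ_self]
    push_cast
    ring

theorem neg_one_zpow_two_sub {K : Type*} [DivisionRing K] (a : ℕ) :
    (-1 : K) ^ ((2 : ℤ) - a) = (-1) ^ a := by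
  rw [zpow_sub₀ (neg_ne_zero.2 one_ne_zero), zpow_natCast, zpow_ofNat, neg_one_sq, one_div, ← inv_pow, inv_neg, inv_one]

theorem sum_mul_sum_mul_inv_add_inv {K : Type*} [Field K] (f g : ℕ → K) (s t : Finset ℕ) :
    ∑ l ∈ s, ∑ m ∈ t, f l * g m * (1 / (l : K) + 1 / (m : K))
      = (∑ l ∈ s, f l / l) * ∑ m ∈ t, g m + (∑ l ∈ s, f l) * ∑ m ∈ t, g m / m := by
  rw [sum_mul_sum, sum_mul_sum, ← sum_add_distrib]
  refine sum_congr rfl fun l _ => ?_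
  rw [← sum_add_distrib]
  refine sum_congr rfl fun m _ => ?_
  ring

theorem stmt11_general (k₁ k₂ : ℕ) :
    (∑ j ∈ Finset.Icc 1 k₂, (1 : ℚ) / (j : ℚ))
        * ∑ m ∈ Finset.Icc 1 k₁, (-1 : ℚ) ^ ((2 : ℤ) - (m : ℤ)) * (k₁.choose m : ℚ)
      + (∑ j ∈ Finset.Icc 1 k₁, (1 : ℚ) / (j : ℚ))
          * ∑ l ∈ Finset.Icc 1 k₂, (-1 : ℚ) ^ ((2 : ℤ) - (l : ℤ)) * (k₂.choose l : ℚ)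
      + ∑ l ∈ Finset.Icc 1 k₂, ∑ m ∈ Finset.Icc 1 k₁,
          (-1 : ℚ) ^ ((2 : ℤ) - (l : ℤ) - (m : ℤ))
            * (k₂.choose l : ℚ) * (k₁.choose m : ℚ) * (1 / (l : ℚ) + 1 / (m : ℚ)) = 0 := by
  have hsign (l m : ℕ) : (-1 : ℚ) ^ ((2 : ℤ) - l - m) * k₂.choose l * k₁.choose m
      = (-1) ^ l * k₂.choose l * ((-1) ^ m * k₁.choose m) := by
    rw [sub_sub, ← Nat.cast_add, neg_one_zpow_two_sub, pow_add]
    ring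
  simp only [hsign, neg_one_zpow_two_sub]
  rw [sum_mul_sum_mul_inv_add_inv, sum_Icc_neg_one_pow_mul_choose_div,
    sum_Icc_neg_one_pow_mul_choose_div]
  simp only [one_div, ← harmonic_eq_sum_Icc]
  ring

theorem stmt11 (k₁ k₂ : ℕ) (hk₁ : 1 ≤ k₁) (hk₂ : 1 ≤ k₂) :
    (∑ j ∈ Finset.Icc 1 k₂, (1 : ℚ) / (j : ℚ))
        * ∑ m ∈ Finset.Icc 1 k₁, (-1 : ℚ) ^ ((2 : ℤ) - (m : ℤ)) * (k₁.choose m : ℚ)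
      + (∑ j ∈ Finset.Icc 1 k₁, (1 : ℚ) / (j : ℚ))
          * ∑ l ∈ Finset.Icc 1 k₂, (-1 : ℚ) ^ ((2 : ℤ) - (l : ℤ)) * (k₂.choose l : ℚ)
      + ∑ l ∈ Finset.Icc 1 k₂, ∑ m ∈ Finset.Icc 1 k₁,
          (-1 : ℚ) ^ ((2 : ℤ) - (l : ℤ) - (m : ℤ))
            * (k₂.choose l : ℚ) * (k₁.choose m : ℚ) * (1 / (l : ℚ) + 1 / (m : ℚ)) = 0 :=
  stmt11_general k₁ k₂
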